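/- arXiv:1805.07912 — 8 statements merged into one kernel-verified Lean document; each statement's English description precedes it below -/
import Mathlib

section
/- Let H be a real inner product space, let v, w ∈ H with v ≠ w, and let δ ∈ (0,1], R > 0, G > 0 be real constants such that ⟨v, w⟩ ≤ −δR‖v‖ and ‖w‖ ≤ G. Then (‖v‖²·‖w‖² − ⟨v,w⟩²) / ‖v−w‖² ≤ (1 − δ²R²/G²)·‖v‖². -/
open scoped RealInnerProductSpace

/-
The numerator `‖v‖²‖w‖² − ⟪v, w⟫²` is a Gram determinant, the square of twice the area of the
triangle `0, v, w`. Dividing it by `‖v − w‖²` gives the squared distance from `0` to the line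
through `v` and `w`, dividing by `‖w‖²` gives the squared distance `‖v‖² − ⟪v, w⟫²/‖w‖²` from `v`
to the line `ℝ w`. Since `⟪v, w⟫ ≤ 0`, the side `v − w` is at least as long as `w`, so the first
is at most the second; the oracle bound `|⟪v, w⟫| ≥ δR‖v‖` together with `‖w‖ ≤ G` then bounds
the second by `(1 − δ²R²/G²)‖v‖²`.
-/

section InnerProductSpace

variable {H : Type*} [NormedAddCommGroup H] [InnerProductSpace ℝ H]

theorem gram_div_norm_sub_sq_le_of_inner_nonpos {v w : H} (hvw : ⟪v, w⟫ ≤ 0) :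
    (‖v‖ ^ 2 * ‖w‖ ^ 2 - ⟪v, w⟫ ^ 2) / ‖v - w‖ ^ 2 ≤ ‖v‖ ^ 2 - ⟪v, w⟫ ^ 2 / ‖w‖ ^ 2 := by
  rcases eq_or_ne w 0 with rfl | hw
  · simp
  have hw2 : 0 < ‖w‖ ^ 2 := by positivity
  have hgram : 0 ≤ ‖v‖ ^ 2 * ‖w‖ ^ 2 - ⟪v, w⟫ ^ 2 := by
    have := abs_real_inner_le_norm v w
    rw [sub_nonneg, ← mul_pow, sq_le_sq, abs_of_nonneg (by positivity : 0 ≤ ‖v‖ * ‖w‖)]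
    exact this
  have hside : ‖w‖ ^ 2 ≤ ‖v - w‖ ^ 2 := by
    rw [norm_sub_sq_real]
    nlinarith [sq_nonneg ‖v‖]
  calc (‖v‖ ^ 2 * ‖w‖ ^ 2 - ⟪v, w⟫ ^ 2) / ‖v - w‖ ^ 2
      ≤ (‖v‖ ^ 2 * ‖w‖ ^ 2 - ⟪v, w⟫ ^ 2) / ‖w‖ ^ 2 := div_le_div_of_nonneg_left hgram hw2 hside
    _ = ‖v‖ ^ 2 - ⟪v, w⟫ ^ 2 / ‖w‖ ^ 2 := by field_simp

theorem sq_div_sq_le_inner_sq_div_norm_sq {v w : H} {t G : ℝ} (ht : 0 ≤ t)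
    (htvw : t ≤ |⟪v, w⟫|) (hwG : ‖w‖ ≤ G) :
    t ^ 2 / G ^ 2 ≤ ⟪v, w⟫ ^ 2 / ‖w‖ ^ 2 := by
  rcases eq_or_ne w 0 with rfl | hw
  · have : t = 0 := le_antisymm (by simpa using htvw) ht
    simp [this]
  have hw0 : 0 < ‖w‖ := norm_pos_iff.2 hw
  calc t ^ 2 / G ^ 2 ≤ t ^ 2 / ‖w‖ ^ 2 := by gcongr
    _ ≤ ⟪v, w⟫ ^ 2 / ‖w‖ ^ 2 := by
        gcongr ?_ / _
        exact sq_le_sq.2 (by rwa [abs_of_nonneg ht])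

end InnerProductSpace

theorem stmt_1_general {H : Type*} [NormedAddCommGroup H] [InnerProductSpace ℝ H]
    (v w : H) (δ R G : ℝ)
    (hδ : δ ∈ Set.Ioc (0 : ℝ) 1) (hR : 0 < R)
    (hor : ⟪v, w⟫ ≤ -(δ * R * ‖v‖)) (hwG : ‖w‖ ≤ G) :
    (‖v‖ ^ 2 * ‖w‖ ^ 2 - ⟪v, w⟫ ^ 2) / ‖v - w‖ ^ 2
      ≤ (1 - δ ^ 2 * R ^ 2 / G ^ 2) * ‖v‖ ^ 2 := by
  have ht : 0 ≤ δ * R * ‖v‖ := by have := hδ.1; positivity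
  have hinner : ⟪v, w⟫ ≤ 0 := hor.trans (neg_nonpos.2 ht)
  have habs : δ * R * ‖v‖ ≤ |⟪v, w⟫| := by
    rw [abs_of_nonpos hinner]
    linarith
  calc (‖v‖ ^ 2 * ‖w‖ ^ 2 - ⟪v, w⟫ ^ 2) / ‖v - w‖ ^ 2
      ≤ ‖v‖ ^ 2 - ⟪v, w⟫ ^ 2 / ‖w‖ ^ 2 := gram_div_norm_sub_sq_le_of_inner_nonpos hinner
    _ ≤ ‖v‖ ^ 2 - (δ * R * ‖v‖) ^ 2 / G ^ 2 :=
        sub_le_sub_left (sq_div_sq_le_inner_sq_div_norm_sq ht habs hwG) _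
    _ = (1 - δ ^ 2 * R ^ 2 / G ^ 2) * ‖v‖ ^ 2 := by ring

/-- One exact line-search Frank–Wolfe step with a δ-approximate LMO contracts the
squared residual by the factor `1 − δ²R²/G²`. -/
theorem stmt_1 {H : Type*} [NormedAddCommGroup H] [InnerProductSpace ℝ H]
    (v w : H) (hvw : v ≠ w) (δ R G : ℝ)
    (hδ : δ ∈ Set.Ioc (0 : ℝ) 1) (hR : 0 < R) (hG : 0 < G)
    (hor : ⟪v, w⟫ ≤ -(δ * R * ‖v‖)) (hwG : ‖w‖ ≤ G) :
    (‖v‖ ^ 2 * ‖w‖ ^ 2 - ⟪v, w⟫ ^ 2) / ‖v - w‖ ^ 2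
      ≤ (1 - δ ^ 2 * R ^ 2 / G ^ 2) * ‖v‖ ^ 2 :=
  stmt_1_general v w δ R G hδ hR hor hwG
end

section
/- Let H be a real inner product space, δ ∈ (0,1], R > 0, G > 0 with δR ≤ G, and let (v_k)_{k≥0}, (w_k)_{k≥0} be sequences in H such that for every k: v_k ≠ w_k, ⟨v_k, w_k⟩ ≤ −δR‖v_k‖, ‖w_k‖ ≤ G, and ‖v_{k+1}‖² ≤ (‖v_k‖²·‖w_k‖² − ⟨v_k,w_k⟩²) / ‖v_k − w_k‖². Then for every N ≥ 0, ‖v_N‖² ≤ (1 − δ²R²/G²)^N · ‖v_0‖² ≤ ‖v_0‖² · exp(−δ²R²N/G²). -/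
set_option maxHeartbeats 1000000


open scoped RealInnerProductSpace

/-- Linear (geometric) convergence of line-search Frank–Wolfe with a δ-approximate
LMO, in the finite-dimensional case (abstract form of Theorem 2, Consistency). -/
theorem stmt_2 {H : Type*} [NormedAddCommGroup H] [InnerProductSpace ℝ H]
    (δ R G : ℝ) (hδ : δ ∈ Set.Ioc (0 : ℝ) 1) (hR : 0 < R) (hG : 0 < G)
    (hδRG : δ * R ≤ G) (v w : ℕ → H)
    (hne : ∀ k, v k ≠ w k)
    (hor : ∀ k, ⟪v k, w k⟫ ≤ -(δ * R * ‖v k‖))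
    (hwG : ∀ k, ‖w k‖ ≤ G)
    (hstep : ∀ k, ‖v (k + 1)‖ ^ 2 ≤
      (‖v k‖ ^ 2 * ‖w k‖ ^ 2 - ⟪v k, w k⟫ ^ 2) / ‖v k - w k‖ ^ 2) :
    ∀ N : ℕ, ‖v N‖ ^ 2 ≤ (1 - δ ^ 2 * R ^ 2 / G ^ 2) ^ N * ‖v 0‖ ^ 2 ∧
      (1 - δ ^ 2 * R ^ 2 / G ^ 2) ^ N * ‖v 0‖ ^ 2
        ≤ ‖v 0‖ ^ 2 * Real.exp (-(δ ^ 2 * R ^ 2 * N / G ^ 2)) := by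
  obtain ⟨hδ0, hδ1⟩ := hδ
  set q : ℝ := δ ^ 2 * R ^ 2 / G ^ 2 with hq
  have hsG : δ * R ≤ G := hδRG
  have hsR : 0 < δ * R := mul_pos hδ0 hR
  have hq0 : 0 ≤ q := by positivity
  have hq1 : q ≤ 1 := by
    rw [hq, div_le_one (by positivity)]
    nlinarith
  -- one-step contraction
  have key : ∀ k, ‖v (k + 1)‖ ^ 2 ≤ (1 - q) * ‖v k‖ ^ 2 := by
    intro k
    set a := ‖v k‖ with ha
    set b := ‖w k‖ with hb
    set c := ⟪v k, w k⟫ with hc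
    have hb0 : 0 ≤ b := norm_nonneg _
    have ha0 : 0 ≤ a := norm_nonneg _
    have hd : 0 < ‖v k - w k‖ := by
      rw [norm_pos_iff, sub_ne_zero]; exact hne k
    have hd2 : (0:ℝ) < ‖v k - w k‖ ^ 2 := by positivity
    have hdsq : ‖v k - w k‖ ^ 2 = a ^ 2 - 2 * c + b ^ 2 := by
      rw [norm_sub_sq_real]
    have hcs : |c| ≤ a * b := abs_real_inner_le_norm _ _
    have hcab : c ≤ a * b := le_trans (le_abs_self _) hcs
    have hcab' : -(a*b) ≤ c := neg_le_of_abs_le hcs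
    have horc : c ≤ -(δ * R * a) := hor k
    rcases eq_or_lt_of_le ha0 with ha0' | ha0'
    · -- a = 0
      have hv0 : v k = 0 := by
        rw [← norm_eq_zero]; exact ha0'.symm
      have hc0 : c = 0 := by rw [hc, hv0, inner_zero_left]
      have : ‖v (k+1)‖ ^ 2 ≤ 0 := by
        have := hstep k
        rw [← ha, ← hb, ← hc, ← ha0', hc0] at this
        simpa using this
      calc ‖v (k+1)‖ ^ 2 ≤ 0 := this
        _ = (1 - q) * a ^ 2 := by rw [← ha0']; ring
    · -- a > 0
      have hc0 : c < 0 := lt_of_le_of_lt horc (by nlinarith)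
      have hbs : δ * R ≤ b := by
        have : δ * R * a ≤ a * b := by nlinarith [neg_le_of_abs_le hcs]
        nlinarith
      have hb0' : 0 < b := lt_of_lt_of_le hsR hbs
      have hnum : 0 ≤ a ^ 2 * b ^ 2 - c ^ 2 := by nlinarith [sq_abs c, abs_nonneg c]
      have hstep' := hstep k
      rw [← ha, ← hb, ← hc] at hstep'
      have hb2d : b ^ 2 ≤ ‖v k - w k‖ ^ 2 := by rw [hdsq]; nlinarith
      have h1 : (a ^ 2 * b ^ 2 - c ^ 2) / ‖v k - w k‖ ^ 2
          ≤ (a ^ 2 * b ^ 2 - c ^ 2) / b ^ 2 :=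
        div_le_div_of_nonneg_left hnum (by positivity) hb2d
      have h2 : (a ^ 2 * b ^ 2 - c ^ 2) / b ^ 2 = a ^ 2 - c ^ 2 / b ^ 2 := by
        field_simp
      have hc2 : (δ * R * a) ^ 2 ≤ c ^ 2 := by
        nlinarith [mul_nonneg (mul_nonneg (mul_nonneg hδ0.le hR.le) ha0) (by linarith : 0 ≤ -c - δ * R * a),
          mul_nonneg (by linarith : (0:ℝ) ≤ -c) (by linarith : 0 ≤ -c - δ * R * a)]
      have h3 : a ^ 2 - c ^ 2 / b ^ 2 ≤ a ^ 2 - (δ * R * a) ^ 2 / b ^ 2 :=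
        sub_le_sub_left (div_le_div_of_nonneg_right hc2 (by positivity)) _
      have hbG : b ^ 2 ≤ G ^ 2 := by nlinarith [hwG k]
      have h4 : a ^ 2 - (δ * R * a) ^ 2 / b ^ 2 ≤ a ^ 2 - (δ * R * a) ^ 2 / G ^ 2 :=
        sub_le_sub_left (div_le_div_of_nonneg_left (by positivity) (by positivity) hbG) _
      have h5 : a ^ 2 - (δ * R * a) ^ 2 / G ^ 2 = (1 - q) * a ^ 2 := by
        rw [hq]; field_simp
      linarith
  -- geometric bound by induction
  intro N
  constructor
  · induction N with
    | zero => simp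
    | succ n ih =>
      calc ‖v (n+1)‖ ^ 2 ≤ (1 - q) * ‖v n‖ ^ 2 := key n
        _ ≤ (1 - q) * ((1 - q) ^ n * ‖v 0‖ ^ 2) := by
            apply mul_le_mul_of_nonneg_left ih (by linarith)
        _ = (1 - q) ^ (n + 1) * ‖v 0‖ ^ 2 := by ring
  · have hexp : (1 - q) ^ N ≤ Real.exp (-(q * N)) := by
      have h1 : 1 - q ≤ Real.exp (-q) := by
        linarith [Real.add_one_le_exp (-q)]
      calc (1 - q) ^ N ≤ Real.exp (-q) ^ N :=
            pow_le_pow_left₀ (by linarith) h1 N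
        _ = Real.exp (-(q * N)) := by
            rw [← Real.exp_nat_mul]; ring_nf
    have : (1 - q) ^ N * ‖v 0‖ ^ 2 ≤ Real.exp (-(q * N)) * ‖v 0‖ ^ 2 :=
      mul_le_mul_of_nonneg_right hexp (by positivity)
    calc (1 - q) ^ N * ‖v 0‖ ^ 2 ≤ Real.exp (-(q * N)) * ‖v 0‖ ^ 2 := this
      _ = ‖v 0‖ ^ 2 * Real.exp (-(δ ^ 2 * R ^ 2 * N / G ^ 2)) := by
          rw [hq]; ring_nf
end

section
/- Let H be a real inner product space, let v, w ∈ H with v ≠ w, and let R > 0, G > 0, α ∈ (0,2) be real constants such that ⟨v, w⟩ ≤ −R‖v‖ and ‖v − w‖ ≤ G. Define the exact line-search step λ = ⟨v, v−w⟩ / ‖v−w‖². Then ‖v + αλ(w − v)‖² ≤ (1 − α(2−α)R²/G²)·‖v‖². -/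
/-!
Expanding the square, the relaxed step `αλ` lowers `‖v‖²` by exactly
`α (2 - α) ⟪v, v - w⟫² / ‖v - w‖²`. Since `⟪v, v - w⟫ = ‖v‖² - ⟪v, w⟫ ≥ R ‖v‖` and
`‖v - w‖ ≤ G`, this decrease is at least `α (2 - α) R² ‖v‖² / G²`.
-/

open scoped RealInnerProductSpace

section

variable {H : Type*} [NormedAddCommGroup H] [InnerProductSpace ℝ H]

/-- Also true for `u = 0`, where division by zero makes both sides `‖x‖²`. -/
theorem norm_sub_smul_inner_div_sq (x u : H) (α : ℝ) :
    ‖x - (α * (⟪x, u⟫ / ‖u‖ ^ 2)) • u‖ ^ 2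
      = ‖x‖ ^ 2 - α * (2 - α) * (⟪x, u⟫ ^ 2 / ‖u‖ ^ 2) := by
  rcases eq_or_ne u 0 with rfl | hu
  · simp
  have hu' : ‖u‖ ^ 2 ≠ 0 := by positivity
  rw [norm_sub_sq_real, real_inner_smul_right, norm_smul, mul_pow, Real.norm_eq_abs, sq_abs]
  field_simp
  ring

theorem mul_norm_le_inner_sub {v w : H} {R : ℝ} (hor : ⟪v, w⟫ ≤ -(R * ‖v‖)) :
    R * ‖v‖ ≤ ⟪v, v - w⟫ := by
  rw [inner_sub_right, real_inner_self_eq_norm_sq]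
  nlinarith [sq_nonneg ‖v‖]

end

theorem stmt_3_general {H : Type*} [NormedAddCommGroup H] [InnerProductSpace ℝ H]
    (v w : H) (hvw : v ≠ w) (R G α : ℝ)
    (hR : 0 < R) (hα : α ∈ Set.Ioo (0 : ℝ) 2)
    (hor : ⟪v, w⟫ ≤ -(R * ‖v‖)) (hD : ‖v - w‖ ≤ G) :
    ‖v + (α * (⟪v, v - w⟫ / ‖v - w‖ ^ 2)) • (w - v)‖ ^ 2
      ≤ (1 - α * (2 - α) * R ^ 2 / G ^ 2) * ‖v‖ ^ 2 := by
  obtain ⟨hα0, hα2⟩ := hα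
  have hd : 0 < ‖v - w‖ := norm_pos_iff.mpr (sub_ne_zero.mpr hvw)
  have hc := mul_norm_le_inner_sub hor
  have hratio : R ^ 2 / G ^ 2 * ‖v‖ ^ 2 ≤ ⟪v, v - w⟫ ^ 2 / ‖v - w‖ ^ 2 :=
    calc R ^ 2 / G ^ 2 * ‖v‖ ^ 2 = (R * ‖v‖) ^ 2 / G ^ 2 := by ring
      _ ≤ ⟪v, v - w⟫ ^ 2 / ‖v - w‖ ^ 2 := by gcongr
  rw [← neg_sub v w, smul_neg, ← sub_eq_add_neg, norm_sub_smul_inner_div_sq]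
  calc ‖v‖ ^ 2 - α * (2 - α) * (⟪v, v - w⟫ ^ 2 / ‖v - w‖ ^ 2)
      ≤ ‖v‖ ^ 2 - α * (2 - α) * (R ^ 2 / G ^ 2 * ‖v‖ ^ 2) := by gcongr
    _ = (1 - α * (2 - α) * R ^ 2 / G ^ 2) * ‖v‖ ^ 2 := by ring

/-- Inexact line-search step: scaling the exact line-search step
`λ = ⟪v, v−w⟫/‖v−w‖²` by a factor `α ∈ (0,2)` still gives a geometric
per-step contraction of the squared residual. -/
theorem stmt_3 {H : Type*} [NormedAddCommGroup H] [InnerProductSpace ℝ H]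
    (v w : H) (hvw : v ≠ w) (R G α : ℝ)
    (hR : 0 < R) (hG : 0 < G) (hα : α ∈ Set.Ioo (0 : ℝ) 2)
    (hor : ⟪v, w⟫ ≤ -(R * ‖v‖)) (hD : ‖v - w‖ ≤ G) :
    ‖v + (α * (⟪v, v - w⟫ / ‖v - w‖ ^ 2)) • (w - v)‖ ^ 2
      ≤ (1 - α * (2 - α) * R ^ 2 / G ^ 2) * ‖v‖ ^ 2 :=
  stmt_3_general v w hvw R G α hR hα hor hD
end

section
/- Let δ, R, G be real numbers with δR > 0 and 2δR ≤ G, set C = G²/(2δR), and let (a_k)_{k≥0} be a sequence of nonnegative real numbers with a_0 ≤ C such that a_{k+1}² ≤ a_k² − 2δR·a_k + G² for every k ≥ 0. Then a_k ≤ C for every k ≥ 0. -/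
/-! The map `x ↦ x² − 2δR·x + G²` sends `[0, C]` into `[0, C²]`: with `c = 2δR` we have
`G² = c·C`, and `x² − c·x + c·C − C² = (x − C)(x + C − c)`, which is `≤ 0` on `[c − C, C] ⊇ [0, C]`
because `c ≤ G ≤ C`. Hence `a_k ≤ C` propagates from `k` to `k + 1`. -/

lemma sq_sub_mul_add_mul_le_sq {c C x : ℝ} (hc : c ≤ x + C) (hxC : x ≤ C) :
    x ^ 2 - c * x + c * C ≤ C ^ 2 := by
  nlinarith [mul_nonpos_of_nonpos_of_nonneg (sub_nonpos.2 hxC) (sub_nonneg.2 hc)]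

lemma le_sq_div_of_le {c G : ℝ} (hc : 0 < c) (h : c ≤ G) : G ≤ G ^ 2 / c := by
  rw [le_div_iff₀ hc]
  nlinarith

/-- Induction lemma for the constant-step-size Frank–Wolfe analysis:
if `a_{k+1}² ≤ a_k² − 2δR·a_k + G²` and `a_0 ≤ C = G²/(2δR)`, then `a_k ≤ C`
for every `k`. -/
theorem stmt_4 (δ R G : ℝ) (hδR : 0 < δ * R) (hG : 2 * δ * R ≤ G)
    (a : ℕ → ℝ) (ha : ∀ k, 0 ≤ a k)
    (hinit : a 0 ≤ G ^ 2 / (2 * δ * R))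
    (hrec : ∀ k, a (k + 1) ^ 2 ≤ a k ^ 2 - 2 * δ * R * a k + G ^ 2) :
    ∀ k, a k ≤ G ^ 2 / (2 * δ * R) := by
  set c := 2 * δ * R
  set C := G ^ 2 / c
  have hc : 0 < c := by simp only [c, mul_assoc]; positivity
  have hcC : c * C = G ^ 2 := mul_div_cancel₀ _ hc.ne'
  have hcle : c ≤ C := hG.trans (le_sq_div_of_le hc hG)
  intro k
  induction k with
  | zero => exact hinit
  | succ k ih =>
    have hsq : a (k + 1) ^ 2 ≤ C ^ 2 := by
      calc a (k + 1) ^ 2 ≤ a k ^ 2 - c * a k + c * C := hcC ▸ hrec k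
        _ ≤ C ^ 2 := sq_sub_mul_add_mul_le_sq (by linarith [ha k]) ih
    exact (pow_le_pow_iff_left₀ (ha _) (hc.le.trans hcle) two_ne_zero).1 hsq
end

section
/- Let H be a real inner product space, δ ∈ (0,1], R > 0, G > 0 with 2δR ≤ G, and let (v_k)_{k≥0}, (w_k)_{k≥0} be sequences in H such that v_{k+1} = (k·v_k + w_k)/(k+1) for every k ≥ 0, and for every k ≥ 0: ⟨v_k, w_k⟩ ≤ −δR‖v_k‖ and ‖w_k‖ ≤ G. Then for every N ≥ 1, ‖v_N‖ ≤ G²/(2δR·N). -/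
open scoped RealInnerProductSpace

/-- O(1/N) convergence of constant-step-size (λ_k = 1/(k+1)) Frank–Wolfe with a
δ-approximate LMO, in the finite-dimensional case (abstract form of Theorem 4). -/
theorem stmt_5 {H : Type*} [NormedAddCommGroup H] [InnerProductSpace ℝ H]
    (δ R G : ℝ) (hδ : δ ∈ Set.Ioc (0 : ℝ) 1) (hR : 0 < R) (hG : 0 < G)
    (h2 : 2 * δ * R ≤ G) (v w : ℕ → H)
    (hrec : ∀ k : ℕ, v (k + 1) = ((k : ℝ) + 1)⁻¹ • ((k : ℝ) • v k + w k))
    (hor : ∀ k, ⟪v k, w k⟫ ≤ -(δ * R * ‖v k‖))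
    (hwG : ∀ k, ‖w k‖ ≤ G) :
    ∀ N : ℕ, 1 ≤ N → ‖v N‖ ≤ G ^ 2 / (2 * δ * R * N) := by
  obtain ⟨hδ0, hδ1⟩ := hδ
  set C := G ^ 2 / (2 * δ * R) with hC
  have hdR : 0 < 2 * δ * R := by positivity
  have hCpos : 0 < C := by positivity
  have hGC : G ≤ C := by
    rw [hC, le_div_iff₀ hdR]
    nlinarith
  have h2dRC : 2 * (δ * R) * C = G ^ 2 := by
    rw [hC]; field_simp
  have key : ∀ N : ℕ, 1 ≤ N → (N : ℝ) * ‖v N‖ ≤ C := by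
    intro N hN
    induction N, hN using Nat.le_induction with
    | base =>
      have hv1 : v 1 = w 0 := by simpa using hrec 0
      simpa [hv1] using (hwG 0).trans hGC
    | succ k hk ih =>
      have hk0 : (0:ℝ) < (k:ℝ) + 1 := by positivity
      have hvk : ((k:ℝ) + 1) • v (k+1) = (k:ℝ) • v k + w k := by
        rw [hrec k, smul_smul, mul_inv_cancel₀ hk0.ne', one_smul]
      have hsq : (((k:ℝ)+1) * ‖v (k+1)‖) ^ 2
          = ((k:ℝ) * ‖v k‖) ^ 2 + 2 * ((k:ℝ) * ⟪v k, w k⟫) + ‖w k‖ ^ 2 := by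
        have h1 : (((k:ℝ)+1) * ‖v (k+1)‖) = ‖((k:ℝ)+1) • v (k+1)‖ := by
          rw [norm_smul, Real.norm_of_nonneg hk0.le]
        rw [h1, hvk, @norm_add_sq_real, norm_smul, real_inner_smul_left,
          Real.norm_of_nonneg (Nat.cast_nonneg k)]
      set t := (k:ℝ) * ‖v k‖ with ht
      have ht0 : 0 ≤ t := by positivity
      have hb : (((k:ℝ)+1) * ‖v (k+1)‖) ^ 2 ≤ t ^ 2 - 2 * (δ * R) * t + G ^ 2 := by
        rw [hsq]
        have h3 := hwG k
        have hker := mul_le_mul_of_nonneg_left (hor k) (Nat.cast_nonneg k : (0:ℝ) ≤ k)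
        nlinarith [norm_nonneg (w k)]
      have hbC : t ^ 2 - 2 * (δ * R) * t + G ^ 2 ≤ C ^ 2 := by
        nlinarith [mul_nonneg (sub_nonneg.mpr ih)
          (by nlinarith : (0:ℝ) ≤ t + C - 2 * (δ * R))]
      have hx0 : 0 ≤ ((k:ℝ)+1) * ‖v (k+1)‖ := by positivity
      have hgoal : ((k:ℝ)+1) * ‖v (k+1)‖ ≤ C := by nlinarith
      push_cast
      exact hgoal
  intro N hN
  have hNpos : (0:ℝ) < (N:ℝ) := by exact_mod_cast hN
  have := key N hN
  rw [mul_comm (2*δ*R) (N:ℝ)] at *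
  rw [show G ^ 2 / ((N:ℝ) * (2*δ*R)) = C / N by rw [hC]; field_simp]
  rw [le_div_iff₀ hNpos]
  linarith
end

section
/- Let δ ∈ (0,1] and D > 0 be real numbers, and let (s_k)_{k≥0} be a sequence of nonnegative real numbers with s_0 ≤ (1+δ)D²/δ such that s_{k+1} ≤ (1 − 2δ/(δk+2))·s_k + 2D²/(δk+2)² for every k ≥ 0. Then s_k ≤ 2(1+δ)D² / (δ(δk+2)) for every k ≥ 0. -/
/-- Induction lemma for the sublinear O(1/N) convergence of Frank–Wolfe in an
infinite-dimensional RKHS: if `s_{k+1} ≤ (1 − 2δ/(δk+2))s_k + 2D²/(δk+2)²`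
and `s_0 ≤ (1+δ)D²/δ`, then `s_k ≤ 2(1+δ)D²/(δ(δk+2))` for every `k`. -/
theorem stmt_7 (δ D : ℝ) (hδ : δ ∈ Set.Ioc (0 : ℝ) 1) (hD : 0 < D)
    (s : ℕ → ℝ) (hs : ∀ k, 0 ≤ s k)
    (h0 : s 0 ≤ (1 + δ) * D ^ 2 / δ)
    (hrec : ∀ k : ℕ,
      s (k + 1) ≤ (1 - 2 * δ / (δ * k + 2)) * s k + 2 * D ^ 2 / (δ * k + 2) ^ 2) :
    ∀ k : ℕ, s k ≤ 2 * (1 + δ) * D ^ 2 / (δ * (δ * k + 2)) := by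
  obtain ⟨hδ0, hδ1⟩ := hδ
  intro k
  induction k with
  | zero =>
    have he : 2 * (1 + δ) * D ^ 2 / (δ * (δ * (0:ℕ) + 2)) = (1 + δ) * D ^ 2 / δ := by
      push_cast
      rw [mul_zero, zero_add]
      field_simp
    rw [he]; exact h0
  | succ k ih =>
    have ht : (2:ℝ) ≤ δ * k + 2 := by
      have := mul_nonneg hδ0.le (Nat.cast_nonneg (α := ℝ) k); linarith
    have ht0 : (0:ℝ) < δ * k + 2 := by linarith
    have hcoef : 0 ≤ 1 - 2 * δ / (δ * k + 2) := by
      rw [sub_nonneg, div_le_one ht0]; linarith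
    have h1 : s (k + 1) ≤ (1 - 2 * δ / (δ * k + 2)) * (2 * (1 + δ) * D ^ 2 / (δ * (δ * k + 2))) + 2 * D ^ 2 / (δ * k + 2) ^ 2 :=
      le_trans (hrec k) (by gcongr)
    refine h1.trans ?_
    have hk : (δ * ↑(k + 1) + 2 : ℝ) = (δ * k + 2) + δ := by push_cast; ring
    rw [hk, ← sub_nonneg]
    have key : 2 * (1 + δ) * D ^ 2 / (δ * (δ * ↑k + 2 + δ)) -
        ((1 - 2 * δ / (δ * ↑k + 2)) * (2 * (1 + δ) * D ^ 2 / (δ * (δ * ↑k + 2))) +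
          2 * D ^ 2 / (δ * ↑k + 2) ^ 2)
        = 2 * D ^ 2 * δ * (δ * ↑k + 2 + 1 + 2 * δ) /
            ((δ * ↑k + 2) ^ 2 * (δ * ↑k + 2 + δ)) := by
      field_simp
      ring
    rw [key]
    positivity
end

section
/- Let H be a real inner product space, δ ∈ (0,1], D > 0, and let (v_k)_{k≥0}, (w_k)_{k≥0} be sequences in H such that ‖v_0‖ ≤ D and, for every k ≥ 0: ⟨v_k, v_k − w_k⟩ ≥ δ‖v_k‖², ‖v_k − w_k‖ ≤ D, and ‖v_{k+1}‖² ≤ ‖(1−λ)v_k + λw_k‖² for every λ ∈ [0,1]. Then for every k ≥ 0, ‖v_k‖² ≤ 2(1+δ)D² / (δ(δk+2)). -/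
open scoped RealInnerProductSpace

private lemma key_real (δ D h h' a : ℝ) (hδ0 : 0 < δ) (hδ1 : δ ≤ 1) (hD : 0 < D)
    (ha : 2 ≤ a) (hh : 0 ≤ h) (hh' : 0 ≤ h')
    (IH : δ * h * a ≤ 2 * (1 + δ) * D ^ 2)
    (step : ∀ l : ℝ, 0 ≤ l → l ≤ 1 → h' ≤ h - 2 * l * δ * h + l ^ 2 * D ^ 2) :
    δ * h' * (a + δ) ≤ 2 * (1 + δ) * D ^ 2 := by
  have hap : (0:ℝ) < a + δ := by linarith
  rcases le_or_gt (δ * h) (D ^ 2) with hc | hc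
  · have hD2 : (0:ℝ) < D ^ 2 := by positivity
    have hl0 : (0:ℝ) ≤ δ * h / D ^ 2 := by positivity
    have hl1 : δ * h / D ^ 2 ≤ 1 := by
      rw [div_le_one hD2]; exact hc
    have hs := step (δ * h / D ^ 2) hl0 hl1
    have hs' : h' ≤ h - δ ^ 2 * h ^ 2 / D ^ 2 := by
      have heq : h - 2 * (δ * h / D ^ 2) * δ * h + (δ * h / D ^ 2) ^ 2 * D ^ 2
          = h - δ ^ 2 * h ^ 2 / D ^ 2 := by field_simp; ring
      linarith [heq ▸ hs]
    rcases le_or_gt (δ * h * (a + δ)) (2 * (1 + δ) * D ^ 2) with h2 | h2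
    · have hle : h' ≤ h := by
        have : (0:ℝ) ≤ δ ^ 2 * h ^ 2 / D ^ 2 := by positivity
        linarith
      have := mul_le_mul_of_nonneg_right (mul_le_mul_of_nonneg_left hle hδ0.le) hap.le
      linarith
    · have hhpos : 0 < h := by nlinarith
      have poly : δ * (h * D ^ 2 - δ ^ 2 * h ^ 2) * (a + δ) ≤ 2 * (1 + δ) * D ^ 2 * D ^ 2 := by
        have F1 := mul_lt_mul_of_pos_left h2 (mul_pos (mul_pos hδ0 hδ0) hhpos)
        have F2 := mul_le_mul_of_nonneg_left IH hD2.le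
        nlinarith [mul_nonneg (mul_nonneg (mul_nonneg hδ0.le hδ0.le) hhpos.le) hD2.le]
      have key : δ * (h - δ ^ 2 * h ^ 2 / D ^ 2) * (a + δ) ≤ 2 * (1 + δ) * D ^ 2 := by
        have heq : δ * (h - δ ^ 2 * h ^ 2 / D ^ 2) * (a + δ)
            = δ * (h * D ^ 2 - δ ^ 2 * h ^ 2) * (a + δ) / D ^ 2 := by
          field_simp
        rw [heq, div_le_iff₀ hD2]
        exact poly
      have := mul_le_mul_of_nonneg_right (mul_le_mul_of_nonneg_left hs' hδ0.le) hap.le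
      linarith
  · have hs := step 1 zero_le_one le_rfl
    have hs' : h' ≤ (1 - δ) * h := by nlinarith
    have e1 := mul_le_mul_of_nonneg_right hs' (mul_pos hδ0 hap).le
    nlinarith [mul_nonneg (mul_nonneg hδ0.le hh) (show (0:ℝ) ≤ δ * (a + δ - 1) by nlinarith)]

/-- Sublinear O(1/k) convergence of line-search Frank–Wolfe with a δ-approximate
LMO in the infinite-dimensional case (abstract form of Theorem 2, Consistency). -/
theorem stmt_8 {H : Type*} [NormedAddCommGroup H] [InnerProductSpace ℝ H]
    (δ D : ℝ) (hδ : δ ∈ Set.Ioc (0 : ℝ) 1) (hD : 0 < D)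
    (v w : ℕ → H) (h0 : ‖v 0‖ ≤ D)
    (hor : ∀ k, δ * ‖v k‖ ^ 2 ≤ ⟪v k, v k - w k⟫)
    (hdiam : ∀ k, ‖v k - w k‖ ≤ D)
    (hstep : ∀ k, ∀ l : ℝ, l ∈ Set.Icc (0 : ℝ) 1 →
      ‖v (k + 1)‖ ^ 2 ≤ ‖(1 - l) • v k + l • w k‖ ^ 2) :
    ∀ k : ℕ, ‖v k‖ ^ 2 ≤ 2 * (1 + δ) * D ^ 2 / (δ * (δ * k + 2)) := by
  obtain ⟨hδ0, hδ1⟩ := hδ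
  have step : ∀ k, ∀ l : ℝ, 0 ≤ l → l ≤ 1 →
      ‖v (k + 1)‖ ^ 2 ≤ ‖v k‖ ^ 2 - 2 * l * δ * ‖v k‖ ^ 2 + l ^ 2 * D ^ 2 := by
    intro k l hl0 hl1
    have heq : (1 - l) • v k + l • w k = v k - l • (v k - w k) := by
      rw [smul_sub, sub_smul, one_smul]; abel
    have h1 := hstep k l ⟨hl0, hl1⟩
    rw [heq, norm_sub_sq_real, real_inner_smul_right, norm_smul] at h1
    have h2 : (‖(l:ℝ)‖ * ‖v k - w k‖) ^ 2 ≤ l ^ 2 * D ^ 2 := by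
      rw [mul_pow, Real.norm_eq_abs, sq_abs]
      exact mul_le_mul_of_nonneg_left (pow_le_pow_left₀ (norm_nonneg _) (hdiam k) 2)
        (sq_nonneg l)
    have h3 := mul_le_mul_of_nonneg_left (hor k) hl0
    nlinarith
  have main : ∀ k : ℕ, δ * ‖v k‖ ^ 2 * (δ * k + 2) ≤ 2 * (1 + δ) * D ^ 2 := by
    intro k
    induction k with
    | zero =>
      simp only [Nat.cast_zero, mul_zero, zero_add]
      have h1 : ‖v 0‖ ^ 2 ≤ D ^ 2 := pow_le_pow_left₀ (norm_nonneg _) h0 2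
      nlinarith [sq_nonneg D]
    | succ n ih =>
      have ha : (2:ℝ) ≤ δ * n + 2 := by nlinarith [mul_nonneg hδ0.le (Nat.cast_nonneg (α := ℝ) n)]
      have := key_real δ D (‖v n‖ ^ 2) (‖v (n+1)‖ ^ 2) (δ * n + 2) hδ0 hδ1 hD ha
        (sq_nonneg _) (sq_nonneg _) ih (step n)
      calc δ * ‖v (n+1)‖ ^ 2 * (δ * (↑(n+1)) + 2)
          = δ * ‖v (n+1)‖ ^ 2 * ((δ * n + 2) + δ) := by push_cast; ring
        _ ≤ 2 * (1 + δ) * D ^ 2 := this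
  intro k
  have hpos : 0 < δ * (δ * k + 2) := by positivity
  rw [le_div_iff₀ hpos]
  calc ‖v k‖ ^ 2 * (δ * (δ * k + 2)) = δ * ‖v k‖ ^ 2 * (δ * k + 2) := by ring
    _ ≤ 2 * (1 + δ) * D ^ 2 := main k
end

section
/- Let H be a real inner product space, let κ > 0, L > 0, G > 0 be real constants, let (Φ_k)_{k≥0} be real numbers with 0 < Φ_k ≤ κGL for all k, and let (v_k)_{k≥0}, (w_k)_{k≥0} be sequences in H such that for every k: v_k ≠ w_k, ⟨v_k, w_k⟩ ≤ −Φ_k/κ, ‖v_k‖ ≤ L, ‖w_k‖ ≤ G, and ‖v_{k+1}‖² ≤ (‖v_k‖²·‖w_k‖² − ⟨v_k,w_k⟩²) / ‖v_k − w_k‖². Then for every N ≥ 0, ‖v_N‖² ≤ ‖v_0‖² · exp(−(1/(κGL))² · Σ_{k=0}^{N−1} Φ_k²). -/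
open scoped RealInnerProductSpace

lemma lazy_fw_step {H : Type*} [NormedAddCommGroup H] [InnerProductSpace ℝ H]
    (κ L G φ : ℝ) (hκ : 0 < κ) (hL : 0 < L) (hG : 0 < G)
    (hφ0 : 0 < φ) (hφ1 : φ ≤ κ * G * L)
    (x y : H) (b : ℝ)
    (hor : ⟪x, y⟫ ≤ -(φ / κ))
    (hvL : ‖x‖ ≤ L) (hwG : ‖y‖ ≤ G)
    (hb : b ≤ (‖x‖ ^ 2 * ‖y‖ ^ 2 - ⟪x, y⟫ ^ 2) / ‖x - y‖ ^ 2) :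
    b ≤ ‖x‖ ^ 2 * Real.exp (-(φ / (κ * G * L)) ^ 2) := by
  set c := ⟪x, y⟫ with hc
  have hcneg : c < 0 := lt_of_le_of_lt hor (neg_lt_zero.mpr (by positivity))
  have hy0 : y ≠ 0 := by
    intro h
    rw [hc, h, inner_zero_right] at hcneg
    exact lt_irrefl 0 hcneg
  have hwpos : 0 < ‖y‖ := norm_pos_iff.mpr hy0
  have hCS : c ^ 2 ≤ ‖x‖ ^ 2 * ‖y‖ ^ 2 := by
    have h := abs_real_inner_le_norm x y
    nlinarith [sq_abs c, abs_nonneg c, norm_nonneg x, norm_nonneg y]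
  have hden : ‖y‖ ^ 2 ≤ ‖x - y‖ ^ 2 := by
    have h := @norm_sub_sq_real H _ _ x y
    nlinarith [sq_nonneg ‖x‖]
  have h1 : (‖x‖ ^ 2 * ‖y‖ ^ 2 - c ^ 2) / ‖x - y‖ ^ 2 ≤
      (‖x‖ ^ 2 * ‖y‖ ^ 2 - c ^ 2) / ‖y‖ ^ 2 :=
    div_le_div_of_nonneg_left (by linarith) (by positivity) hden
  have hexp : 1 - (φ / (κ * G * L)) ^ 2 ≤ Real.exp (-(φ / (κ * G * L)) ^ 2) := by
    have := Real.add_one_le_exp (-(φ / (κ * G * L)) ^ 2)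
    linarith
  have hc2 : (φ / κ) ^ 2 ≤ c ^ 2 := by nlinarith [div_pos hφ0 hκ]
  have h2 : (‖x‖ ^ 2 * ‖y‖ ^ 2 - c ^ 2) / ‖y‖ ^ 2 ≤
      ‖x‖ ^ 2 * Real.exp (-(φ / (κ * G * L)) ^ 2) := by
    rw [div_le_iff₀ (by positivity)]
    have haL : ‖x‖ ^ 2 ≤ L ^ 2 := by nlinarith [norm_nonneg x]
    have hyG : ‖y‖ ^ 2 ≤ G ^ 2 := by nlinarith [norm_nonneg y]
    have htnn : 0 ≤ (φ / (κ * G * L)) ^ 2 := sq_nonneg _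
    have key : ‖x‖ ^ 2 * (φ / (κ * G * L)) ^ 2 * ‖y‖ ^ 2 ≤ c ^ 2 := by
      have h4 : ‖x‖ ^ 2 * (φ / (κ * G * L)) ^ 2 * ‖y‖ ^ 2 ≤
          L ^ 2 * (φ / (κ * G * L)) ^ 2 * G ^ 2 :=
        mul_le_mul (mul_le_mul haL le_rfl htnn (sq_nonneg L)) hyG (sq_nonneg ‖y‖)
          (by positivity)
      have h5 : L ^ 2 * (φ / (κ * G * L)) ^ 2 * G ^ 2 = (φ / κ) ^ 2 := by
        field_simp
      linarith
    have g1 : ‖x‖ ^ 2 * (1 - (φ / (κ * G * L)) ^ 2) * ‖y‖ ^ 2 ≤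
        ‖x‖ ^ 2 * Real.exp (-(φ / (κ * G * L)) ^ 2) * ‖y‖ ^ 2 :=
      mul_le_mul_of_nonneg_right
        (mul_le_mul_of_nonneg_left hexp (sq_nonneg ‖x‖)) (sq_nonneg ‖y‖)
    have g2 : ‖x‖ ^ 2 * (1 - (φ / (κ * G * L)) ^ 2) * ‖y‖ ^ 2 =
        ‖x‖ ^ 2 * ‖y‖ ^ 2 - ‖x‖ ^ 2 * (φ / (κ * G * L)) ^ 2 * ‖y‖ ^ 2 := by ring
    linarith
  linarith

/-- Convergence of Lazy MMD-FW (abstract form of Theorem 6): with duality-gap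
thresholds `Φ_k` satisfied by each positive oracle call, the squared residual
decays geometrically in the number of positive calls. -/
theorem stmt_16 {H : Type*} [NormedAddCommGroup H] [InnerProductSpace ℝ H]
    (κ L G : ℝ) (hκ : 0 < κ) (hL : 0 < L) (hG : 0 < G)
    (Φ : ℕ → ℝ) (hΦ : ∀ k, 0 < Φ k ∧ Φ k ≤ κ * G * L)
    (v w : ℕ → H)
    (hne : ∀ k, v k ≠ w k)
    (hor : ∀ k, ⟪v k, w k⟫ ≤ -(Φ k / κ))
    (hvL : ∀ k, ‖v k‖ ≤ L)
    (hwG : ∀ k, ‖w k‖ ≤ G)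
    (hstep : ∀ k, ‖v (k + 1)‖ ^ 2 ≤
      (‖v k‖ ^ 2 * ‖w k‖ ^ 2 - ⟪v k, w k⟫ ^ 2) / ‖v k - w k‖ ^ 2) :
    ∀ N : ℕ, ‖v N‖ ^ 2 ≤
      ‖v 0‖ ^ 2 * Real.exp (-(1 / (κ * G * L)) ^ 2 * ∑ k ∈ Finset.range N, Φ k ^ 2) := by
  intro N
  induction N with
  | zero => simp
  | succ N ih =>
      have hkey := lazy_fw_step κ L G (Φ N) hκ hL hG (hΦ N).1 (hΦ N).2
        (v N) (w N) (‖v (N + 1)‖ ^ 2) (hor N) (hvL N) (hwG N) (hstep N)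
      have h2 : ‖v N‖ ^ 2 * Real.exp (-(Φ N / (κ * G * L)) ^ 2) ≤
          (‖v 0‖ ^ 2 * Real.exp (-(1 / (κ * G * L)) ^ 2 * ∑ k ∈ Finset.range N, Φ k ^ 2)) *
            Real.exp (-(Φ N / (κ * G * L)) ^ 2) :=
        mul_le_mul_of_nonneg_right ih (Real.exp_nonneg _)
      have h3 : (‖v 0‖ ^ 2 * Real.exp (-(1 / (κ * G * L)) ^ 2 * ∑ k ∈ Finset.range N, Φ k ^ 2)) *
            Real.exp (-(Φ N / (κ * G * L)) ^ 2) =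
          ‖v 0‖ ^ 2 * Real.exp (-(1 / (κ * G * L)) ^ 2 * ∑ k ∈ Finset.range (N + 1), Φ k ^ 2) := by
        rw [mul_assoc, ← Real.exp_add, Finset.sum_range_succ]
        congr 2
        field_simp
        ring
      linarith
end
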